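/- arXiv:2007.13846 — 3 statements merged into one kernel-verified Lean document; each statement's English description precedes it below -/
import Mathlib

section
/- Let σ = ⟨v₁,…,v_k⟩ be a strictly convex finitely generated cone in a lattice N. Then every integral vector of σ (i.e., every element of σ ∩ N) is a nonnegative integral combination of minimal vectors and vertices of σ; that is, the monoid σ ∩ N is generated by the vertices of σ together with the minimal vectors of σ. -/
/-!
By Farkas' lemma (in the form of Gordan's theorem) strict convexity yields a linear functional
`φ` that is positive on every vertex, hence on every nonzero vector of `σ`. As `N` is finitely
generated, a positive multiple of `φ` takes integer values on `N`, so it is `≥ 1` on the nonzero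
integral vectors of `σ`. Splitting such a vector into two nonzero integral vectors of `σ` therefore
lowers this height, and repeated splitting ends in indecomposable vectors: vertices or minimal
vectors.
-/

universe u

/-- The cone of all nonnegative rational combinations of a finite family of vectors. -/
def coneSpan {V : Type u} [AddCommGroup V] [Module ℚ V] {k : ℕ} (v : Fin k → V) : Set V :=
  {x | ∃ c : Fin k → ℚ, (∀ i, 0 ≤ c i) ∧ x = ∑ i, c i • v i}

/-- A finitely generated cone is strictly convex if it contains no line,
i.e. `σ ∩ (−σ) = {0}`. -/
def StrictlyConvexCone {V : Type u} [AddCommGroup V] [Module ℚ V] {k : ℕ}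
    (v : Fin k → V) : Prop :=
  ∀ x ∈ coneSpan v, -x ∈ coneSpan v → x = 0

/-- `w` is a primitive vector of the lattice `N`: a nonzero element of `N` generating the
monoid `ℚ≥0·w ∩ N`. -/
def IsPrimitive {V : Type u} [AddCommGroup V] [Module ℚ V] (N : Submodule ℤ V)
    (w : V) : Prop :=
  w ∈ N ∧ w ≠ 0 ∧ ∀ x ∈ N, (∃ c : ℚ, 0 ≤ c ∧ x = c • w) → ∃ m : ℕ, x = (m : ℤ) • w

/-- `v` lists the vertices of the cone it spans: all entries are primitive and the number of
generators is minimal among generating families of the same cone. -/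
def IsVertexFamily {V : Type u} [AddCommGroup V] [Module ℚ V] (N : Submodule ℤ V) {k : ℕ}
    (v : Fin k → V) : Prop :=
  (∀ i, IsPrimitive N (v i)) ∧
    ∀ (m : ℕ) (w : Fin m → V), coneSpan w = coneSpan v → k ≤ m

/-- The lattice `N_σ = N ∩ span_ℚ σ` of the cone spanned by `v`. -/
def latticeOf {V : Type u} [AddCommGroup V] [Module ℚ V] (N : Submodule ℤ V) {k : ℕ}
    (v : Fin k → V) : Submodule ℤ V :=
  N ⊓ (Submodule.span ℚ (Set.range v)).restrictScalars ℤ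

/-- The lattice `N ∩ span_ℚ S` of a subset `S`. -/
def latticeOfSet {V : Type u} [AddCommGroup V] [Module ℚ V] (N : Submodule ℤ V)
    (S : Set V) : Submodule ℤ V :=
  N ⊓ (Submodule.span ℚ S).restrictScalars ℤ

/-- A minimal vector of the cone spanned by `v`: a nonzero integral vector of the cone which
is not a vertex and cannot be written as a sum of two nonzero integral vectors of the cone. -/
def IsMinimalVec {V : Type u} [AddCommGroup V] [Module ℚ V] (N : Submodule ℤ V) {k : ℕ}
    (v : Fin k → V) (x : V) : Prop :=
  x ∈ coneSpan v ∧ x ∈ N ∧ x ≠ 0 ∧ (∀ i, x ≠ v i) ∧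
    ¬ ∃ y z : V, y ∈ coneSpan v ∧ y ∈ N ∧ y ≠ 0 ∧
      z ∈ coneSpan v ∧ z ∈ N ∧ z ≠ 0 ∧ x = y + z

/-- A small vector of the cone spanned by `v`: a nonzero integral vector of the cone which
cannot be written as a vertex plus an integral vector of the cone. -/
def IsSmallVec {V : Type u} [AddCommGroup V] [Module ℚ V] (N : Submodule ℤ V) {k : ℕ}
    (v : Fin k → V) (x : V) : Prop :=
  x ∈ coneSpan v ∧ x ∈ N ∧ x ≠ 0 ∧
    ∀ i, ¬ ∃ y : V, y ∈ coneSpan v ∧ y ∈ N ∧ x = v i + y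

/-- A cone is regular if its generators form part of a `ℤ`-basis of the lattice `N`. -/
def IsRegularCone {V : Type u} [AddCommGroup V] [Module ℚ V] (N : Submodule ℤ V) {k : ℕ}
    (v : Fin k → V) : Prop :=
  ∃ (ι : Type u) (b : Module.Basis ι ℤ ↥N) (f : Fin k → ι),
    Function.Injective f ∧ ∀ i, (b (f i) : V) = v i

/-- The determinant of a simplicial cone, computed with respect to a `ℤ`-basis of its
lattice `N_σ`. -/
noncomputable def coneDet {V : Type u} [AddCommGroup V] [Module ℚ V] (N : Submodule ℤ V) {k : ℕ}
    (v : Fin k → V) (hv : ∀ i, v i ∈ latticeOf N v)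
    (b : Module.Basis (Fin k) ℤ ↥(latticeOf N v)) : ℤ :=
  (Matrix.of fun i j => b.repr ⟨v j, hv j⟩ i).det

/-- `F` is a face of the cone `σ` (both given as subsets): the vanishing locus on `σ` of a
`ℚ`-linear functional which is nonnegative on `σ`. -/
def IsFaceOf {V : Type u} [AddCommGroup V] [Module ℚ V] (σ F : Set V) : Prop :=
  ∃ φ : V →ₗ[ℚ] ℚ, (∀ x ∈ σ, 0 ≤ φ x) ∧ F = {x | x ∈ σ ∧ φ x = 0}

/-- `v₁, …, v_k` are `ℚ`-linearly independent from `w₁, …, w_s`. -/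
def RelSimplicial {V : Type u} [AddCommGroup V] [Module ℚ V] {k s : ℕ}
    (v : Fin k → V) (w : Fin s → V) : Prop :=
  ∀ (c : Fin k → ℚ) (d : Fin s → ℚ),
    (∑ i, c i • v i) + ∑ j, d j • w j = 0 → ∀ i, c i = 0

/-- A cone (given as a subset, with its lattice) is irreducible if it admits no direct sum
decomposition `F = F₁ ⊕ ρ₁` in which `ρ₁` is a regular cone of positive dimension. -/
def IsIrreducibleCone {V : Type u} [AddCommGroup V] [Module ℚ V] (N : Submodule ℤ V)
    (F : Set V) : Prop :=
  ¬ ∃ (m l : ℕ) (t : Fin m → V) (r : Fin l → V), 0 < l ∧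
      IsRegularCone N r ∧
      F = coneSpan (Fin.append t r) ∧
      latticeOfSet N F = latticeOf N t ⊔ latticeOf N r ∧
      Disjoint (latticeOf N t) (latticeOf N r)

section ConeSpan

variable {V : Type*} [AddCommGroup V] [Module ℚ V] {k : ℕ}

theorem zero_mem_coneSpan (v : Fin k → V) : (0 : V) ∈ coneSpan v :=
  ⟨0, fun _ => le_rfl, by simp⟩

theorem add_mem_coneSpan {v : Fin k → V} {x y : V} (hx : x ∈ coneSpan v) (hy : y ∈ coneSpan v) :
    x + y ∈ coneSpan v := by
  obtain ⟨c, hc, rfl⟩ := hx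
  obtain ⟨d, hd, rfl⟩ := hy
  exact ⟨c + d, fun i => add_nonneg (hc i) (hd i), by simp [add_smul, Finset.sum_add_distrib]⟩

theorem mem_coneSpan_self (v : Fin k → V) (i : Fin k) : v i ∈ coneSpan v :=
  ⟨Pi.single i 1, fun j => by by_cases h : j = i <;> simp [h], by simp [Pi.single_apply]⟩

def coneSpanAddSubmonoid (v : Fin k → V) : AddSubmonoid V where
  carrier := coneSpan v
  add_mem' := add_mem_coneSpan
  zero_mem' := zero_mem_coneSpan v

theorem mem_coneSpan_snoc_iff {w : Fin k → V} {a x : V} :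
    x ∈ coneSpan (Fin.snoc w a : Fin (k + 1) → V) ↔ ∃ t : ℚ, 0 ≤ t ∧ x - t • a ∈ coneSpan w := by
  constructor
  · rintro ⟨c, hc, rfl⟩
    refine ⟨c (Fin.last k), hc _, Fin.init c, fun i => hc _, ?_⟩
    simp [Fin.sum_univ_castSucc, Fin.init]
  · rintro ⟨t, ht, c, hc, hx⟩
    refine ⟨Fin.snoc c t, Fin.forall_fin_succ'.2 ⟨by simpa using hc, by simpa using ht⟩, ?_⟩
    simp [Fin.sum_univ_castSucc, ← hx]

theorem dual_nonneg_of_mem_coneSpan {v : Fin k → V} {φ : V →ₗ[ℚ] ℚ} (hφ : ∀ i, 0 ≤ φ (v i))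
    {x : V} (hx : x ∈ coneSpan v) : 0 ≤ φ x := by
  obtain ⟨c, hc, rfl⟩ := hx
  simpa using Finset.sum_nonneg fun i _ => mul_nonneg (hc i) (hφ i)

theorem dual_pos_of_mem_coneSpan {v : Fin k → V} {φ : V →ₗ[ℚ] ℚ} (hφ : ∀ i, 0 < φ (v i))
    {x : V} (hx : x ∈ coneSpan v) (hx0 : x ≠ 0) : 0 < φ x := by
  obtain ⟨c, hc, rfl⟩ := hx
  obtain ⟨i, hi⟩ : ∃ i, c i ≠ 0 := by
    by_contra! h
    simp [h] at hx0
  simpa using Finset.sum_pos' (fun i _ => mul_nonneg (hc i) (hφ i).le)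
    ⟨i, Finset.mem_univ i, mul_pos ((hc i).lt_of_ne' hi) (hφ i)⟩

/-- One Fourier–Motzkin elimination step: after projecting along `a` onto the kernel of a
functional separating `b` from the cone of `w` but negative on `a`, the last generator
disappears. -/
theorem exists_dual_of_notMem_coneSpan_snoc {w : Fin k → V} {a b : V}
    (ih : ∀ (u : Fin k → V) (b : V), b ∉ coneSpan u →
      ∃ φ : V →ₗ[ℚ] ℚ, (∀ i, 0 ≤ φ (u i)) ∧ φ b < 0)
    (hb : b ∉ coneSpan (Fin.snoc w a : Fin (k + 1) → V)) :
    ∃ φ : V →ₗ[ℚ] ℚ, (∀ i, 0 ≤ φ ((Fin.snoc w a : Fin (k + 1) → V) i)) ∧ φ b < 0 := by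
  have hbw : b ∉ coneSpan w := fun h => hb (mem_coneSpan_snoc_iff.2 ⟨0, le_rfl, by simpa⟩)
  obtain ⟨φ, hφw, hφb⟩ := ih w b hbw
  rcases le_or_gt 0 (φ a) with ha | ha
  · exact ⟨φ, Fin.forall_fin_succ'.2 ⟨by simpa using hφw, by simpa using ha⟩, hφb⟩
  set π : V →ₗ[ℚ] V := LinearMap.id - (φ a)⁻¹ • φ.smulRight a with hπ_def
  have hπ : ∀ x, π x = x - (φ x / φ a) • a := fun x => by
    simp [hπ_def, div_eq_inv_mul, mul_smul]
  have hπb : π b ∉ coneSpan (π ∘ w) := by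
    rintro ⟨c, hc, hcb⟩
    set y := ∑ i, c i • w i
    have hy : 0 ≤ φ y := dual_nonneg_of_mem_coneSpan hφw ⟨c, hc, rfl⟩
    have hπy : π b = π y := by simp [hcb, y, map_sum]
    refine hb (mem_coneSpan_snoc_iff.2 ⟨φ (b - y) / φ a, ?_, c, hc, ?_⟩)
    · exact div_nonneg_of_nonpos (by rw [map_sub]; linarith) ha.le
    · rw [← sub_eq_zero, ← sub_eq_zero.2 hπy, ← map_sub, hπ]
      abel
  obtain ⟨ψ, hψ, hψb⟩ := ih (π ∘ w) (π b) hπb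
  refine ⟨ψ ∘ₗ π, Fin.forall_fin_succ'.2 ⟨by simpa using hψ, ?_⟩, hψb⟩
  simp [hπ, ha.ne]

theorem exists_dual_of_notMem_coneSpan (v : Fin k → V) {b : V} (hb : b ∉ coneSpan v) :
    ∃ φ : V →ₗ[ℚ] ℚ, (∀ i, 0 ≤ φ (v i)) ∧ φ b < 0 := by
  induction k generalizing b with
  | zero =>
    have hb0 : b ≠ 0 := fun h => hb (h ▸ zero_mem_coneSpan v)
    obtain ⟨φ, hφ⟩ := Module.Projective.exists_dual_eq_one ℚ hb0
    exact ⟨-φ, finZeroElim, by simp [hφ]⟩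
  | succ k ih =>
    rw [← Fin.snoc_init_self v] at hb ⊢
    exact exists_dual_of_notMem_coneSpan_snoc (fun u _ => ih u) hb

end ConeSpan

theorem exists_pos_nat_mul_apply_eq_intCast {V : Type*} [AddCommGroup V] [Module ℚ V]
    (N : Submodule ℤ V) [Module.Finite ℤ N] (φ : V →ₗ[ℚ] ℚ) :
    ∃ d : ℕ, 0 < d ∧ ∀ x ∈ N, ∃ m : ℤ, (d : ℚ) * φ x = m := by
  have hfg : (N.map (φ.restrictScalars ℤ)).FG := (Module.Finite.iff_fg.1 ‹_›).map _
  obtain ⟨a, ha, hint⟩ := FractionalIdeal.isFractional_of_fg (S := nonZeroDivisors ℤ) hfg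
  refine ⟨a.natAbs, Int.natAbs_pos.2 (nonZeroDivisors.ne_zero ha), fun x hx => ?_⟩
  obtain ⟨m, hm⟩ := hint _ ⟨x, hx, rfl⟩
  refine ⟨a.sign * m, ?_⟩
  simp only [LinearMap.restrictScalars_apply, algebraMap_int_eq, eq_intCast, zsmul_eq_mul] at hm
  rw [Int.cast_mul, hm, ← mul_assoc, ← Int.cast_mul, Int.sign_mul_self, Int.cast_natCast]

section StrictlyConvex

variable {V : Type*} [AddCommGroup V] [Module ℚ V] {k : ℕ} {v : Fin k → V}

theorem StrictlyConvexCone.smul_eq_zero_of_sum_eq_zero (hsc : StrictlyConvexCone v)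
    {c : Fin k → ℚ} (hc : ∀ i, 0 ≤ c i) (hsum : ∑ i, c i • v i = 0) (j : Fin k) :
    c j • v j = 0 := by
  refine hsc _ ⟨Pi.single j (c j), fun i => ?_, by simp [Pi.single_apply]⟩
    ⟨c - Pi.single j (c j), fun i => ?_, ?_⟩
  · by_cases h : i = j <;> simp [h, hc]
  · by_cases h : i = j <;> simp [h, hc]
  · simp [sub_smul, Finset.sum_sub_distrib, hsum, Pi.single_apply]

/-- Gordan's theorem: applying Farkas' lemma to the lifts `(vᵢ, 1)` and the point `(0, 1)`. -/
theorem StrictlyConvexCone.exists_dual_pos (hsc : StrictlyConvexCone v) (hv : ∀ i, v i ≠ 0) :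
    ∃ φ : V →ₗ[ℚ] ℚ, ∀ i, 0 < φ (v i) := by
  have hb : ((0 : V), (1 : ℚ)) ∉ coneSpan fun i => (v i, (1 : ℚ)) := by
    rintro ⟨c, hc, hcb⟩
    simp only [Prod.ext_iff, Prod.fst_sum, Prod.snd_sum, Prod.smul_mk, smul_eq_mul,
      mul_one] at hcb
    have hc0 : ∀ i, c i = 0 := fun i =>
      (smul_eq_zero.1 (hsc.smul_eq_zero_of_sum_eq_zero hc hcb.1.symm i)).resolve_right (hv i)
    simp [hc0] at hcb
  obtain ⟨φ, hφ, hφb⟩ := exists_dual_of_notMem_coneSpan _ hb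
  refine ⟨φ ∘ₗ LinearMap.inl ℚ V ℚ, fun i => ?_⟩
  have hsplit : φ (v i, 1) = φ (v i, 0) + φ (0, 1) := by rw [← map_add, Prod.mk_add_mk]; simp
  have hφi := hφ i
  simp only [LinearMap.comp_apply, LinearMap.inl_apply]
  linarith

theorem StrictlyConvexCone.exists_dual_one_le (N : Submodule ℤ V) [Module.Finite ℤ N]
    (hsc : StrictlyConvexCone v) (hv : ∀ i, v i ≠ 0) :
    ∃ φ : V →ₗ[ℚ] ℚ, ∀ x ∈ coneSpan v ∩ (N : Set V), x ≠ 0 → 1 ≤ φ x := by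
  obtain ⟨φ, hφ⟩ := hsc.exists_dual_pos hv
  obtain ⟨d, hd, hint⟩ := exists_pos_nat_mul_apply_eq_intCast N φ
  refine ⟨(d : ℚ) • φ, fun x ⟨hx, hxN⟩ hx0 => ?_⟩
  obtain ⟨m, hm⟩ := hint x hxN
  have hpos : (0 : ℚ) < m :=
    hm ▸ mul_pos (by exact_mod_cast hd) (dual_pos_of_mem_coneSpan hφ hx hx0)
  rw [LinearMap.smul_apply, smul_eq_mul, hm]
  exact_mod_cast (Int.cast_pos.1 hpos : 0 < m)

end StrictlyConvex

section Indecomposable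

variable {M : Type*} [AddCommMonoid M]

def IsIndecomposable (S : Set M) (x : M) : Prop :=
  x ∈ S ∧ x ≠ 0 ∧ ¬ ∃ y z, y ∈ S ∧ y ≠ 0 ∧ z ∈ S ∧ z ≠ 0 ∧ x = y + z

/-- Each splitting into two nonzero parts lowers the height `h` by at least one. -/
theorem subset_closure_isIndecomposable {S : Set M} (h : M →+ ℚ)
    (hS : ∀ x ∈ S, x ≠ 0 → 1 ≤ h x) :
    S ⊆ AddSubmonoid.closure {x | IsIndecomposable S x} := by
  suffices ∀ n : ℕ, ∀ x ∈ S, h x ≤ n → x ∈ AddSubmonoid.closure {x | IsIndecomposable S x} from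
    fun x hx => this ⌈h x⌉₊ x hx (Nat.le_ceil _)
  intro n
  induction n with
  | zero =>
    intro x hx hxn
    obtain rfl : x = 0 := by
      by_contra hx0
      linarith [hS x hx hx0, (by exact_mod_cast hxn : h x ≤ 0)]
    exact zero_mem _
  | succ n ih =>
    intro x hx hxn
    by_cases hx0 : x = 0
    · exact hx0 ▸ zero_mem _
    by_cases hdec : ∃ y z, y ∈ S ∧ y ≠ 0 ∧ z ∈ S ∧ z ≠ 0 ∧ x = y + z
    · obtain ⟨y, z, hy, hy0, hz, hz0, rfl⟩ := hdec
      have hhy := hS y hy hy0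
      have hhz := hS z hz hz0
      rw [map_add] at hxn
      push_cast at hxn
      exact add_mem (ih y hy (by linarith)) (ih z hz (by linarith))
    · exact AddSubmonoid.subset_closure ⟨hx, hx0, hdec⟩

end Indecomposable

theorem IsIndecomposable.isMinimalVec {V : Type*} [AddCommGroup V] [Module ℚ V]
    {N : Submodule ℤ V} {k : ℕ} {v : Fin k → V} {x : V}
    (hx : IsIndecomposable (coneSpan v ∩ (N : Set V)) x) (hxv : ∀ i, x ≠ v i) :
    IsMinimalVec N v x := by
  obtain ⟨⟨hx, hxN⟩, hx0, hdec⟩ := hx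
  exact ⟨hx, hxN, hx0, hxv, fun ⟨y, z, hy, hyN, hy0, hz, hzN, hz0, h⟩ =>
    hdec ⟨y, z, ⟨hy, hyN⟩, hy0, ⟨hz, hzN⟩, hz0, h⟩⟩

/-- The monoid `σ ∩ N` of integral vectors of a strictly convex finitely
generated cone `σ = ⟨v₁,…,v_k⟩` is generated by the vertices together with the minimal
vectors of `σ`. -/
theorem cone_monoid_generated_by_vertices_and_minimal_vectors
    {V : Type u} [AddCommGroup V] [Module ℚ V] (N : Submodule ℤ V) [Module.Finite ℤ ↥N]
    {k : ℕ} (v : Fin k → V)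
    (hsc : StrictlyConvexCone v) (hvert : IsVertexFamily N v) :
    (AddSubmonoid.closure (Set.range v ∪ {y : V | IsMinimalVec N v y}) : Set V)
      = coneSpan v ∩ (N : Set V) := by
  obtain ⟨hprim, -⟩ := hvert
  obtain ⟨φ, hφ⟩ := hsc.exists_dual_one_le N fun i => (hprim i).2.1
  refine subset_antisymm ?_ ?_
  · refine SetLike.coe_subset_coe.2
      ((AddSubmonoid.closure_le (S := coneSpanAddSubmonoid v ⊓ N.toAddSubmonoid)).2 ?_)
    rintro y (⟨i, rfl⟩ | hy)
    · exact ⟨mem_coneSpan_self v i, (hprim i).1⟩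
    · exact ⟨hy.1, hy.2.1⟩
  · refine (subset_closure_isIndecomposable φ.toAddMonoidHom hφ).trans
      (SetLike.coe_subset_coe.2 (AddSubmonoid.closure_mono fun x hx => ?_))
    by_cases hxv : x ∈ Set.range v
    · exact Or.inl hxv
    · exact Or.inr (hx.isMinimalVec fun i h => hxv ⟨i, h.symm⟩)
end

section
/- Let σ = ⟨v₁,…,v_k⟩ be a simplicial cone in a lattice N. If σ has no minimal vectors, then σ is regular: the monoid σ ∩ N_σ is generated by the vertices v₁,…,v_k, and v₁,…,v_k form a ℤ-basis of N_σ. -/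
universe u

/-! The coordinate sum `φ` with respect to the linearly independent vertices is positive on the
nonzero points of `σ`, and as `N_σ` is finitely generated, `φ` takes values in `(1/d)ℤ` on `N_σ`
for some `d > 0`. With no minimal vectors, every lattice point of `σ` other than `0` and the
vertices splits into two nonzero lattice points of `σ`, each of strictly smaller height `d φ`;
induction on the height shows that the vertices generate `σ ∩ N`. Adding a suitable nonnegative
integer combination of the vertices moves any `x ∈ N_σ` into `σ`, so the vertices also span `N_σ`
over `ℤ`, and being linearly independent they form a basis of it. -/

open Submodule

section Cone

variable {V : Type u} [AddCommGroup V] [Module ℚ V] {k : ℕ} (v : Fin k → V)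

lemma coneSpan_subset_span : coneSpan v ⊆ span ℚ (Set.range v) := by
  rintro x ⟨c, -, rfl⟩
  exact sum_mem fun i _ => smul_mem _ _ (subset_span ⟨i, rfl⟩)

lemma closure_range_subset_coneSpan :
    (AddSubmonoid.closure (Set.range v) : Set V) ⊆ coneSpan v := by
  intro x hx
  induction hx using AddSubmonoid.closure_induction with
  | mem x hx =>
      obtain ⟨i, rfl⟩ := hx
      exact ⟨Pi.single i 1, fun j => by by_cases h : j = i <;> simp [h], by simp [Pi.single_apply]⟩
  | zero => exact ⟨0, fun _ => le_rfl, by simp⟩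
  | add x y _ _ hx hy =>
      obtain ⟨c, hc, rfl⟩ := hx
      obtain ⟨c', hc', rfl⟩ := hy
      exact ⟨c + c', fun i => add_nonneg (hc i) (hc' i), by
        simp [add_smul, Finset.sum_add_distrib]⟩

variable {v} in
lemma pos_of_mem_coneSpan {φ : V →ₗ[ℚ] ℚ} (hφ : ∀ i, 0 < φ (v i)) {x : V}
    (hx : x ∈ coneSpan v) (hx0 : x ≠ 0) : 0 < φ x := by
  obtain ⟨c, hc, rfl⟩ := hx
  obtain ⟨i, hi⟩ : ∃ i, c i ≠ 0 := by
    by_contra! h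
    exact hx0 (by simp [h])
  rw [map_sum]
  simp only [map_smul, smul_eq_mul]
  exact Finset.sum_pos' (fun j _ => mul_nonneg (hc j) (hφ j).le)
    ⟨i, Finset.mem_univ _, mul_pos ((hc i).lt_of_ne' hi) (hφ i)⟩

end Cone

lemma LinearIndependent.exists_dual_eq_one {K V ι : Type*} [DivisionRing K] [AddCommGroup V]
    [Module K V] {v : ι → V} (hv : LinearIndependent K v) :
    ∃ φ : V →ₗ[K] K, ∀ i, φ (v i) = 1 := by
  have hs : LinearIndepOn K id (Set.range v) := (linearIndepOn_id_range_iff hv.injective).mpr hv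
  refine ⟨(Module.Basis.extend hs).sumCoords, fun i => ?_⟩
  have hi : v i ∈ hs.extend (Set.subset_univ _) := hs.subset_extend _ ⟨i, rfl⟩
  simpa using (Module.Basis.extend hs).sumCoords_self_apply (i := ⟨v i, hi⟩)

lemma Submodule.FG.exists_nat_mul_eq_int {M : Type*} [AddCommGroup M] {P : Submodule ℤ M}
    (hP : P.FG) (f : M →+ ℚ) : ∃ d : ℕ, 0 < d ∧ ∀ x ∈ P, ∃ m : ℤ, d * f x = m := by
  obtain ⟨S, rfl⟩ := hP
  refine ⟨∏ s ∈ S, (f s).den, Finset.prod_pos fun s _ => (f s).pos, fun x hx => ?_⟩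
  induction hx using Submodule.span_induction with
  | mem x hx =>
      obtain ⟨e, he⟩ := Finset.dvd_prod_of_mem (fun s => (f s).den) hx
      refine ⟨e * (f x).num, ?_⟩
      push_cast [he]
      linear_combination (e : ℚ) * Rat.mul_den_eq_num (f x)
  | zero => exact ⟨0, by simp⟩
  | add x y _ _ hx hy =>
      obtain ⟨m, hm⟩ := hx
      obtain ⟨n, hn⟩ := hy
      exact ⟨m + n, by rw [map_add, mul_add, hm, hn]; push_cast; ring⟩
  | smul a x _ hx =>
      obtain ⟨m, hm⟩ := hx
      exact ⟨a * m, by rw [map_zsmul, zsmul_eq_mul, mul_left_comm, hm]; push_cast; ring⟩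

lemma AddSubmonoid.subset_closure_of_decompose {M : Type*} [AddCommMonoid M] {S T : Set M}
    (h : M →+ ℚ) (hpos : ∀ x ∈ S, x ≠ 0 → 1 ≤ h x)
    (hdec : ∀ x ∈ S, x ≠ 0 → x ∉ T → ∃ y ∈ S, ∃ z ∈ S, y ≠ 0 ∧ z ≠ 0 ∧ x = y + z) :
    S ⊆ closure T := by
  suffices ∀ n : ℕ, ∀ x ∈ S, h x ≤ n → x ∈ closure T from
    fun x hx => this _ x hx (Nat.le_ceil _)
  intro n
  induction n with
  | zero =>
      intro x hx hle
      by_cases hx0 : x = 0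
      · exact hx0 ▸ zero_mem _
      · linarith [hpos x hx hx0, show h x ≤ 0 by exact_mod_cast hle]
  | succ n ih =>
      intro x hx hle
      by_cases hx0 : x = 0
      · exact hx0 ▸ zero_mem _
      by_cases hxT : x ∈ T
      · exact subset_closure hxT
      obtain ⟨y, hy, z, hz, hy0, hz0, rfl⟩ := hdec x hx hx0 hxT
      have := hpos y hy hy0
      have := hpos z hz hz0
      push_cast [map_add] at hle
      exact add_mem (ih y hy (by linarith)) (ih z hz (by linarith))

section Lattice

variable {V : Type u} [AddCommGroup V] [Module ℚ V] (N : Submodule ℤ V) {k : ℕ} (v : Fin k → V)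

lemma latticeOf_fg [Module.Finite ℤ N] : (latticeOf N v).FG :=
  FG.of_le (Module.Finite.iff_fg.mp ‹_›) inf_le_left

variable {N v}

lemma span_int_le_latticeOf (hvN : ∀ i, v i ∈ N) : span ℤ (Set.range v) ≤ latticeOf N v :=
  span_le.mpr <| by
    rintro _ ⟨i, rfl⟩
    exact ⟨hvN i, subset_span ⟨i, rfl⟩⟩

lemma latticeOf_le_span_int (hvN : ∀ i, v i ∈ N)
    (hgen : coneSpan v ∩ N ⊆ AddSubmonoid.closure (Set.range v)) :
    latticeOf N v ≤ span ℤ (Set.range v) := by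
  intro x ⟨hxN, hxspan⟩
  obtain ⟨c, rfl⟩ := (mem_span_range_iff_exists_fun ℚ).mp hxspan
  set w : V := ∑ i, ⌈-c i⌉₊ • v i
  have hwN : w ∈ N := sum_mem fun i _ => nsmul_mem (hvN i) _
  have hw : w ∈ span ℤ (Set.range v) :=
    sum_mem fun i _ => nsmul_mem (subset_span (Set.mem_range_self i)) _
  have hcone : (∑ i, c i • v i) + w ∈ coneSpan v :=
    ⟨fun i => c i + ⌈-c i⌉₊, fun i => by linarith [Nat.le_ceil (-c i)], by
      simp [w, add_smul, Finset.sum_add_distrib, Nat.cast_smul_eq_nsmul]⟩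
  have hsum : (∑ i, c i • v i) + w ∈ span ℤ (Set.range v) :=
    AddSubmonoid.closure_le (S := (span ℤ (Set.range v)).toAddSubmonoid)
      |>.mpr subset_span (hgen ⟨hcone, add_mem hxN hwN⟩)
  simpa using sub_mem hsum hw

end Lattice

/-- A simplicial cone `σ = ⟨v₁,…,v_k⟩` with no minimal vectors is regular:
the monoid `σ ∩ N_σ` is generated by the vertices, and `v₁,…,v_k` form a `ℤ`-basis of
`N_σ`. -/
theorem regular_of_no_minimal_vectors
    {V : Type u} [AddCommGroup V] [Module ℚ V] (N : Submodule ℤ V) [Module.Finite ℤ ↥N]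
    {k : ℕ} (v : Fin k → V)
    (hind : LinearIndependent ℚ v) (hprim : ∀ i, IsPrimitive N (v i))
    (hnomin : ∀ x : V, ¬ IsMinimalVec N v x) :
    ((AddSubmonoid.closure (Set.range v) : Set V) = coneSpan v ∩ (N : Set V))
      ∧ ∃ b : Module.Basis (Fin k) ℤ ↥(latticeOf N v), ∀ i, (b i : V) = v i := by
  have hvN i : v i ∈ N := (hprim i).1
  obtain ⟨φ, hφ⟩ := hind.exists_dual_eq_one
  obtain ⟨d, hd, hint⟩ := (latticeOf_fg N v).exists_nat_mul_eq_int φ.toAddMonoidHom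
  have hheight : ∀ x ∈ coneSpan v ∩ N, x ≠ 0 → 1 ≤ (d • φ.toAddMonoidHom) x := by
    rintro x ⟨hx, hxN⟩ hx0
    obtain ⟨m, hm⟩ := hint x ⟨hxN, coneSpan_subset_span v hx⟩
    have hpos : (0 : ℚ) < m :=
      hm ▸ mul_pos (by exact_mod_cast hd) (pos_of_mem_coneSpan (by simp [hφ]) hx hx0)
    rw [AddMonoidHom.nsmul_apply, nsmul_eq_mul, hm]
    exact_mod_cast (show (0 : ℤ) < m by exact_mod_cast hpos)
  have hdecomp : ∀ x ∈ coneSpan v ∩ N, x ≠ 0 → x ∉ Set.range v →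
      ∃ y ∈ coneSpan v ∩ N, ∃ z ∈ coneSpan v ∩ N, y ≠ 0 ∧ z ≠ 0 ∧ x = y + z := by
    rintro x ⟨hx, hxN⟩ hx0 hxv
    by_contra! h
    exact hnomin x ⟨hx, hxN, hx0, fun i hi => hxv ⟨i, hi.symm⟩,
      fun ⟨y, z, hy, hyN, hy0, hz, hzN, hz0, hyz⟩ => h y ⟨hy, hyN⟩ z ⟨hz, hzN⟩ hy0 hz0 hyz⟩
  have hgen := AddSubmonoid.subset_closure_of_decompose _ hheight hdecomp
  have hlattice : latticeOf N v = span ℤ (Set.range v) :=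
    (latticeOf_le_span_int hvN hgen).antisymm (span_int_le_latticeOf hvN)
  refine ⟨Set.Subset.antisymm (Set.subset_inter (closure_range_subset_coneSpan v) ?_) hgen,
    (Module.Basis.span (hind.restrict_scalars' ℤ)).map (LinearEquiv.ofEq _ _ hlattice.symm),
    fun i => by simp⟩
  exact AddSubmonoid.closure_le (S := N.toAddSubmonoid).mpr (Set.range_subset_iff.mpr hvN)
end

section
/- Let σ = τ ⊕ ρ be a direct sum decomposition of a strictly convex finitely generated cone σ in a lattice N, meaning N_σ = N_τ ⊕ N_ρ and σ = τ + ρ, where τ and ρ are strictly convex finitely generated cones with τ ⊆ N_τ ⊗ ℚ and ρ ⊆ N_ρ ⊗ ℚ, and ρ is regular. Then every irreducible face of σ is contained in τ. (This observation implies that every strictly convex finitely generated cone σ has a unique maximal irreducible face sing(σ), so that σ = sing(σ) × reg(σ) with reg(σ) regular.) -/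
universe u

/-! Write `F = {x ∈ σ | φ x = 0}` with `φ ≥ 0` on `σ = τ + ρ`. Because `φ` is nonnegative on
both summands, `F` is the sum of the faces of `τ` and `ρ` cut out by `φ`, and these are spanned by
the generators of `τ` and `ρ` on which `φ` vanishes: `F = τ' ⊕ ρ'`. The lattice splitting
`N_F = N_{τ'} ⊕ N_{ρ'}` is inherited from `N_σ = N_τ ⊕ N_ρ`, because disjointness of `N_τ` and
`N_ρ` makes the rational spans of `τ` and `ρ` independent, and `ρ'` is regular as a subfamily of a
basis. Irreducibility of `F` therefore leaves `ρ'` without generators, i.e. `F = τ' ⊆ τ`. -/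

theorem Fin.range_append {α : Type*} {m l : ℕ} (t : Fin m → α) (r : Fin l → α) :
    Set.range (Fin.append t r) = Set.range t ∪ Set.range r := by
  refine Set.Subset.antisymm ?_ (Set.union_subset ?_ ?_)
  · rintro _ ⟨i, rfl⟩
    refine Fin.addCases (fun a => ?_) (fun b => ?_) i
    · exact Or.inl ⟨a, (Fin.append_left t r a).symm⟩
    · exact Or.inr ⟨b, (Fin.append_right t r b).symm⟩
  · rintro _ ⟨a, rfl⟩
    exact ⟨Fin.castAdd l a, Fin.append_left t r a⟩
  · rintro _ ⟨b, rfl⟩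
    exact ⟨Fin.natAdd m b, Fin.append_right t r b⟩

section

variable {V : Type u} [AddCommGroup V] [Module ℚ V]

section Cones

open scoped Pointwise

theorem coneSpan_eq_hull {k : ℕ} (v : Fin k → V) :
    coneSpan v = PointedCone.hull ℚ (Set.range v) := by
  ext x
  rw [SetLike.mem_coe, Submodule.mem_span_range_iff_exists_fun]
  constructor
  · rintro ⟨c, hc, rfl⟩
    exact ⟨fun i => ⟨c i, hc i⟩, rfl⟩
  · rintro ⟨c, rfl⟩
    exact ⟨fun i => c i, fun i => (c i).2, rfl⟩

theorem self_mem_coneSpan {k : ℕ} (v : Fin k → V) (i : Fin k) : v i ∈ coneSpan v := by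
  rw [coneSpan_eq_hull]
  exact Submodule.subset_span (Set.mem_range_self i)

theorem coneSpan_subset_coneSpan {k k' : ℕ} {v : Fin k → V} {w : Fin k' → V}
    (h : ∀ i, w i ∈ coneSpan v) : coneSpan w ⊆ coneSpan v := by
  simp only [coneSpan_eq_hull] at h ⊢
  exact Submodule.span_le.mpr (Set.range_subset_iff.mpr h)

theorem coneSpan_append {m l : ℕ} (t : Fin m → V) (r : Fin l → V) :
    coneSpan (Fin.append t r) = coneSpan t + coneSpan r := by
  simp only [coneSpan_eq_hull, Fin.range_append, Submodule.span_union, Submodule.coe_sup]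

theorem coneSpan_subset_coneSpan_append_left {m l : ℕ} {t : Fin m → V} (r : Fin l → V) :
    coneSpan t ⊆ coneSpan (Fin.append t r) :=
  coneSpan_subset_coneSpan fun i => by
    simpa using self_mem_coneSpan (Fin.append t r) (Fin.castAdd l i)

theorem coneSpan_subset_coneSpan_append_right {m l : ℕ} (t : Fin m → V) {r : Fin l → V} :
    coneSpan r ⊆ coneSpan (Fin.append t r) :=
  coneSpan_subset_coneSpan fun j => by
    simpa using self_mem_coneSpan (Fin.append t r) (Fin.natAdd m j)

theorem span_coneSpan {k : ℕ} (v : Fin k → V) :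
    Submodule.span ℚ (coneSpan v) = Submodule.span ℚ (Set.range v) := by
  rw [coneSpan_eq_hull]
  exact Submodule.span_span_of_tower _ _ _

theorem setOf_mem_add_and_eq_zero {A B : Set V} {φ : V →ₗ[ℚ] ℚ}
    (hA : ∀ x ∈ A, 0 ≤ φ x) (hB : ∀ x ∈ B, 0 ≤ φ x) :
    {x | x ∈ A + B ∧ φ x = 0} = {x | x ∈ A ∧ φ x = 0} + {x | x ∈ B ∧ φ x = 0} := by
  ext x
  simp only [Set.mem_ofPred_eq, Set.mem_add]
  constructor
  · rintro ⟨⟨a, ha, b, hb, rfl⟩, hab⟩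
    rw [map_add, add_eq_zero_iff_of_nonneg (hA a ha) (hB b hb)] at hab
    exact ⟨a, ⟨ha, hab.1⟩, b, ⟨hb, hab.2⟩, rfl⟩
  · rintro ⟨a, ⟨ha, ha0⟩, b, ⟨hb, hb0⟩, rfl⟩
    exact ⟨⟨a, ha, b, hb, rfl⟩, by rw [map_add, ha0, hb0, add_zero]⟩

theorem setOf_mem_coneSpan_and_eq_zero {k k' : ℕ} (v : Fin k → V) {φ : V →ₗ[ℚ] ℚ}
    (hφ : ∀ x ∈ coneSpan v, 0 ≤ φ x) (e : Fin k' ≃ {i // φ (v i) = 0}) :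
    {x | x ∈ coneSpan v ∧ φ x = 0} = coneSpan (v ∘ Subtype.val ∘ e) := by
  classical
  ext x
  constructor
  · rintro ⟨⟨c, hc, rfl⟩, hx⟩
    have hterms : ∀ i, c i * φ (v i) = 0 := by
      simp only [map_sum, map_smul, smul_eq_mul] at hx
      exact fun i => (Finset.sum_eq_zero_iff_of_nonneg fun j _ =>
        mul_nonneg (hc j) (hφ _ (self_mem_coneSpan v j))).mp hx i (Finset.mem_univ i)
    refine ⟨fun a => c (e a), fun a => hc _, ?_⟩
    rw [← Fintype.sum_subtype_add_sum_subtype (fun i => φ (v i) = 0),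
      Fintype.sum_eq_zero (fun i : {i // ¬φ (v i) = 0} => c i • v i)
        fun i => by rw [(mul_eq_zero.mp (hterms i)).resolve_right i.2, zero_smul],
      add_zero, ← e.sum_comp]
    rfl
  · rintro ⟨c, hc, rfl⟩
    refine ⟨coneSpan_subset_coneSpan (fun a => self_mem_coneSpan v _) ⟨c, hc, rfl⟩, ?_⟩
    simp only [map_sum, map_smul, Function.comp_apply, (e _).2, smul_zero, Finset.sum_const_zero]

theorem setOf_mem_coneSpan_append_and_eq_zero {m l m' l' : ℕ} (t : Fin m → V) (r : Fin l → V)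
    {φ : V →ₗ[ℚ] ℚ} (hφ : ∀ x ∈ coneSpan (Fin.append t r), 0 ≤ φ x)
    (e₁ : Fin m' ≃ {i // φ (t i) = 0}) (e₂ : Fin l' ≃ {j // φ (r j) = 0}) :
    {x | x ∈ coneSpan (Fin.append t r) ∧ φ x = 0} =
      coneSpan (Fin.append (t ∘ Subtype.val ∘ e₁) (r ∘ Subtype.val ∘ e₂)) := by
  have hφt : ∀ x ∈ coneSpan t, 0 ≤ φ x := fun x hx =>
    hφ x (coneSpan_subset_coneSpan_append_left r hx)
  have hφr : ∀ x ∈ coneSpan r, 0 ≤ φ x := fun x hx =>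
    hφ x (coneSpan_subset_coneSpan_append_right t hx)
  rw [coneSpan_append, setOf_mem_add_and_eq_zero hφt hφr, setOf_mem_coneSpan_and_eq_zero t hφt,
    setOf_mem_coneSpan_and_eq_zero r hφr, coneSpan_append]

end Cones

section Lattices

variable {N : Submodule ℤ V}

theorem exists_zsmul_mem_span_int {s : Set V} {x : V} (hx : x ∈ Submodule.span ℚ s) :
    ∃ d : ℤ, d ≠ 0 ∧ d • x ∈ Submodule.span ℤ s := by
  obtain ⟨y, hy, z, rfl⟩ := (IsLocalization.mem_span_iff (nonZeroDivisors ℤ) (S := ℚ)).mp hx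
  refine ⟨z, nonZeroDivisors.coe_ne_zero z, ?_⟩
  have h := IsLocalization.mk'_spec' ℚ (1 : ℤ) z
  rw [eq_intCast, map_one] at h
  rwa [← Int.cast_smul_eq_zsmul ℚ, smul_smul, h, one_smul]

theorem disjoint_span_of_disjoint_latticeOf {k k' : ℕ} {t : Fin k → V} {r : Fin k' → V}
    (ht : ∀ i, t i ∈ N) (hdisj : Disjoint (latticeOf N t) (latticeOf N r)) :
    Disjoint (Submodule.span ℚ (Set.range t)) (Submodule.span ℚ (Set.range r)) := by
  rw [Submodule.disjoint_def]
  intro x hxt hxr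
  obtain ⟨d, hd, hdx⟩ := exists_zsmul_mem_span_int hxt
  have hdxN : d • x ∈ N := Submodule.span_le.mpr (Set.range_subset_iff.mpr ht) hdx
  have hdx0 : (d : ℚ) • x = 0 := by
    rw [Int.cast_smul_eq_zsmul]
    exact (Submodule.disjoint_def.mp hdisj) _ ⟨hdxN, Submodule.smul_of_tower_mem _ d hxt⟩
      ⟨hdxN, Submodule.smul_of_tower_mem _ d hxr⟩
  exact (smul_eq_zero.mp hdx0).resolve_left (Int.cast_ne_zero.mpr hd)

theorem latticeOf_mono {k k' : ℕ} {v : Fin k → V} {w : Fin k' → V}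
    (h : Set.range w ⊆ Set.range v) : latticeOf N w ≤ latticeOf N v :=
  inf_le_inf_left N (Submodule.restrictScalars_mono ℤ (Submodule.span_mono h))

theorem latticeOf_comp_le {k k' : ℕ} (v : Fin k → V) (g : Fin k' → Fin k) :
    latticeOf N (v ∘ g) ≤ latticeOf N v :=
  latticeOf_mono (Set.range_comp_subset_range g v)

theorem latticeOfSet_coneSpan {k : ℕ} (v : Fin k → V) :
    latticeOfSet N (coneSpan v) = latticeOf N v := by
  rw [latticeOfSet, span_coneSpan, latticeOf]

theorem latticeOf_append_eq_sup_of_range_subset {m l m' l' : ℕ}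
    {t : Fin m → V} {r : Fin l → V} {t' : Fin m' → V} {r' : Fin l' → V} (htN : ∀ i, t i ∈ N)
    (hsup : latticeOf N (Fin.append t r) = latticeOf N t ⊔ latticeOf N r)
    (hdisj : Disjoint (latticeOf N t) (latticeOf N r))
    (ht : Set.range t' ⊆ Set.range t) (hr : Set.range r' ⊆ Set.range r) :
    latticeOf N (Fin.append t' r') = latticeOf N t' ⊔ latticeOf N r' := by
  refine le_antisymm ?_ (sup_le (latticeOf_mono (by simp [Fin.range_append]))
    (latticeOf_mono (by simp [Fin.range_append])))
  rintro x ⟨hxN, hx⟩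
  have hx' : x ∈ Submodule.span ℚ (Set.range t') ⊔ Submodule.span ℚ (Set.range r') := by
    rwa [← Submodule.span_union, ← Fin.range_append]
  obtain ⟨a, ha, b, hb, rfl⟩ := Submodule.mem_sup.mp hx'
  have hab : a + b ∈ latticeOf N t ⊔ latticeOf N r := by
    refine hsup ▸ ⟨hxN, ?_⟩
    rw [Fin.range_append, Submodule.span_union]
    exact sup_le_sup (Submodule.span_mono (R := ℚ) ht) (Submodule.span_mono hr) hx'
  obtain ⟨a', ha', b', hb', hsum⟩ := Submodule.mem_sup.mp hab
  -- `a - a' = b' - b` lies in both rational spans, which meet only in `0`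
  have ha'a : a' = a := by
    refine (sub_eq_zero.mp (Submodule.disjoint_def.mp
      (disjoint_span_of_disjoint_latticeOf htN hdisj) _ ?_ ?_)).symm
    · exact Submodule.sub_mem _ (Submodule.span_mono ht ha) ha'.2
    · rw [show a - a' = b' - b by rw [sub_eq_sub_iff_add_eq_add, ← hsum, add_comm]]
      exact Submodule.sub_mem _ hb'.2 (Submodule.span_mono hr hb)
  have hb'b : b' = b := by rw [ha'a] at hsum; exact add_left_cancel hsum
  exact Submodule.mem_sup.mpr ⟨a, ⟨ha'a ▸ ha'.1, ha⟩, b, ⟨hb'b ▸ hb'.1, hb⟩, rfl⟩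

theorem IsRegularCone.comp {k k' : ℕ} {r : Fin k → V} (hr : IsRegularCone N r)
    {g : Fin k' → Fin k} (hg : Function.Injective g) : IsRegularCone N (r ∘ g) := by
  obtain ⟨ι, b, f, hf, hb⟩ := hr
  exact ⟨ι, b, f ∘ g, hf.comp hg, fun i => hb (g i)⟩

end Lattices

end

theorem irreducible_face_contained_in_first_factor_general
    {V : Type u} [AddCommGroup V] [Module ℚ V] (N : Submodule ℤ V)
    {m l : ℕ} (t : Fin m → V) (r : Fin l → V)
    (hvert : IsVertexFamily N (Fin.append t r))
    (hsup : latticeOf N (Fin.append t r) = latticeOf N t ⊔ latticeOf N r)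
    (hdisj : Disjoint (latticeOf N t) (latticeOf N r))
    (hreg : IsRegularCone N r)
    (F : Set V)
    (hF : IsFaceOf (coneSpan (Fin.append t r)) F)
    (hirr : IsIrreducibleCone N F) :
    F ⊆ coneSpan t := by
  classical
  obtain ⟨φ, hφ, rfl⟩ := hF
  obtain ⟨m', ⟨e₁⟩⟩ : ∃ m', Nonempty (Fin m' ≃ {i // φ (t i) = 0}) :=
    ⟨_, ⟨(Fintype.equivFin _).symm⟩⟩
  obtain ⟨l', ⟨e₂⟩⟩ : ∃ l', Nonempty (Fin l' ≃ {j // φ (r j) = 0}) :=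
    ⟨_, ⟨(Fintype.equivFin _).symm⟩⟩
  rw [setOf_mem_coneSpan_append_and_eq_zero t r hφ e₁ e₂] at hirr ⊢
  rcases Nat.eq_zero_or_pos l' with rfl | hl'
  · rw [Fin.append_right_nil _ _ rfl]
    exact coneSpan_subset_coneSpan fun i => self_mem_coneSpan t _
  · have htN : ∀ i, t i ∈ N := fun i => by simpa using (hvert.1 (Fin.castAdd l i)).1
    refine absurd ⟨m', l', _, _, hl', hreg.comp (Subtype.val_injective.comp e₂.injective), rfl,
      ?_, ?_⟩ hirr
    · rw [latticeOfSet_coneSpan]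
      exact latticeOf_append_eq_sup_of_range_subset htN hsup hdisj
        (Set.range_comp_subset_range _ t) (Set.range_comp_subset_range _ r)
    · exact hdisj.mono (latticeOf_comp_le t _) (latticeOf_comp_le r _)

/-- If `σ = τ ⊕ ρ` is a direct sum decomposition of a strictly convex
finitely generated cone (so `σ = τ + ρ` and `N_σ = N_τ ⊕ N_ρ`) with `ρ` regular, then every
irreducible face of `σ` is contained in `τ`. -/
theorem irreducible_face_contained_in_first_factor
    {V : Type u} [AddCommGroup V] [Module ℚ V] (N : Submodule ℤ V) [Module.Finite ℤ ↥N]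
    {m l : ℕ} (t : Fin m → V) (r : Fin l → V)
    (hsc : StrictlyConvexCone (Fin.append t r))
    (hvert : IsVertexFamily N (Fin.append t r))
    (hsup : latticeOf N (Fin.append t r) = latticeOf N t ⊔ latticeOf N r)
    (hdisj : Disjoint (latticeOf N t) (latticeOf N r))
    (hreg : IsRegularCone N r)
    (F : Set V)
    (hF : IsFaceOf (coneSpan (Fin.append t r)) F)
    (hirr : IsIrreducibleCone N F) :
    F ⊆ coneSpan t :=
  irreducible_face_contained_in_first_factor_general N t r hvert hsup hdisj hreg F hF hirr
end
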